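/- Let f : ℕ → ℝ be an essentially bounded arithmetic function and let N, h ∈ ℕ with h → ∞ and h = o(N) as N → ∞. Then for every ε > 0, I_f(N,h) = Σ_{a≠0} W(a)·C_f(a) + O_ε( N^ε·( Nh + h³ ) ). -/

import Mathlib

open Finset Filter Asymptotics

noncomputable section

/-- An arithmetic function is *essentially bounded* if `f n ≪_ε n^ε` for every `ε > 0`. -/
def EssBdd (f : ℕ → ℝ) : Prop :=
  ∀ ε : ℝ, 0 < ε → ∃ C : ℝ, ∀ n : ℕ, 1 ≤ n → |f n| ≤ C * (n : ℝ) ^ ε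

/-- The symmetry integral `I_f(N,h) = ∫_N^{2N} |∑_{|n-x|≤h} f(n) sgn(n-x)|² dx`. -/
def symInt (f : ℕ → ℝ) (N h : ℕ) : ℝ :=
  ∫ x in (N : ℝ)..(2 * (N : ℝ)),
    (∑ n ∈ Finset.Icc ⌈x - (h : ℝ)⌉ ⌊x + (h : ℝ)⌋,
      f n.toNat * Real.sign ((n : ℝ) - x)) ^ 2

/-- The weight `W(a) = 1_{[-2h,2h]}(a) · max(2h - 3|a|, |a| - 2h)`. -/
def Wt (h : ℕ) (a : ℤ) : ℝ :=
  if |a| ≤ 2 * (h : ℤ) then max (2 * (h : ℝ) - 3 * |(a : ℝ)|) (|(a : ℝ)| - 2 * (h : ℝ)) else 0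

/-- The correlation `C_f(a) = ∑_{N < n ≤ 2N} f(n) f(n-a)` (with `f` extended by `0`
to nonpositive arguments). -/
def Cf (f : ℕ → ℝ) (N : ℕ) (a : ℤ) : ℝ :=
  ∑ n ∈ Finset.Ioc (N : ℤ) (2 * (N : ℤ)), f n.toNat * f (n - a).toNat

/-!
With `φ_n(x) = 1_{|n-x| ≤ h} sgn(n-x)`, expanding the square gives
`I_f(N,h) = ∑_{n,m} f(n) f(m) K(n,m)` with `K(n,m) = ∫_N^{2N} φ_n φ_m`. The product
`sgn(n-x) sgn(m-x)` is `-1` between `n` and `m` and `1` elsewhere (up to a null set), so when the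
window `[max(n,m) - h, min(n,m) + h]` lies in `[N, 2N]` one gets
`K(n,m) = (2h - d) - 2 min(d, 2h - d) = W(d)` for `d = |n - m|`: this is the main term
`∑_{a ≠ 0} W(a) C_f(a)` written as a quadratic form in `f`. The two kernels differ only on the
diagonal and in the `O(h)` rows within `h` of `N` or `2N`, each row having `O(h)` entries of
size `O(h)`. Since `h ≤ N` eventually, every `f(n)` involved has `n ≤ 4N`, hence is
`≪ N^{ε/2}`, and the error is `≪ N^ε (N h + h³)`.
-/

open MeasureTheory Set

lemma volume_real_eq_of_Ioo_subset_of_subset_Icc {c d : ℝ} {T : Set ℝ} (hcd : c ≤ d)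
    (h₁ : Ioo c d ⊆ T) (h₂ : T ⊆ Icc c d) : volume.real T = d - c :=
  have hT : volume T ≠ ⊤ := ((measure_mono h₂).trans_lt measure_Icc_lt_top).ne
  le_antisymm
    ((measureReal_mono h₂ measure_Icc_lt_top.ne).trans_eq (Real.volume_real_Icc_of_le hcd))
    ((Real.volume_real_Ioo_of_le hcd).symm.trans_le (measureReal_mono h₁ hT))

lemma integral_indicator_one_of_le {a b : ℝ} (hab : a ≤ b) {s : Set ℝ}
    (hs : MeasurableSet s) :
    ∫ x in a..b, s.indicator 1 x = volume.real (s ∩ Ioc a b) := by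
  rw [intervalIntegral.integral_of_le hab, integral_indicator_one hs,
    measureReal_restrict_apply hs]

lemma intervalIntegrable_indicator_one (a b : ℝ) {s : Set ℝ} (hs : MeasurableSet s) :
    IntervalIntegrable (s.indicator (1 : ℝ → ℝ)) volume a b := by
  rw [intervalIntegrable_iff]
  exact (integrableOn_const measure_Ioc_lt_top.ne enorm_ne_top).indicator hs

lemma abs_sum_le_card_mul {ι : Type*} [DecidableEq ι] {s t : Finset ι} {g : ι → ℝ} {c : ℝ}
    (hc : 0 ≤ c) (hg : ∀ i ∈ s, |g i| ≤ c) (hsupp : ∀ i ∈ s, g i ≠ 0 → i ∈ t) :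
    |∑ i ∈ s, g i| ≤ t.card * c :=
  calc |∑ i ∈ s, g i| = |∑ i ∈ s.filter (g · ≠ 0), g i| := by
        rw [Finset.sum_filter_ne_zero]
    _ ≤ ∑ i ∈ s.filter (g · ≠ 0), |g i| := Finset.abs_sum_le_sum_abs _ _
    _ ≤ (s.filter (g · ≠ 0)).card • c :=
        Finset.sum_le_card_nsmul _ _ _ fun i hi => hg i (Finset.mem_of_mem_filter i hi)
    _ ≤ t.card * c := by
        rw [nsmul_eq_mul]
        gcongr
        exact fun i hi => hsupp i (Finset.mem_of_mem_filter i hi) (Finset.mem_filter.1 hi).2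

lemma sign_sub_mul_sign_sub {p q x : ℝ} (hp : x ≠ p) (hq : x ≠ q) :
    Real.sign (p - x) * Real.sign (q - x) = if x ∈ Ioo (min p q) (max p q) then -1 else 1 := by
  rcases hp.lt_or_gt with hp | hp <;> rcases hq.lt_or_gt with hq | hq <;>
    simp [Real.sign_of_pos, Real.sign_of_neg, *, hp.not_gt, hq.not_gt]

def signBump (h p x : ℝ) : ℝ := (Icc (p - h) (p + h)).indicator (fun x => Real.sign (p - x)) x

lemma signBump_mul_signBump_ae_eq (h p q : ℝ) :
    (fun x => signBump h p x * signBump h q x) =ᵐ[volume]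
      fun x => (Icc (max p q - h) (min p q + h)).indicator 1 x
        - 2 * (Icc (max p q - h) (min p q + h) ∩ Ioo (min p q) (max p q)).indicator 1 x := by
  have hpq : volume ({p, q} : Set ℝ) = 0 := (Set.toFinite _).measure_zero _
  filter_upwards [measure_eq_zero_iff_ae_notMem.mp hpq] with x hx
  simp only [mem_insert_iff, mem_singleton_iff, not_or] at hx
  have hwin : x ∈ Icc (max p q - h) (min p q + h) ↔
      x ∈ Icc (p - h) (p + h) ∧ x ∈ Icc (q - h) (q + h) := by
    rw [← mem_inter_iff, Icc_inter_Icc, max_sub_sub_right, min_add_add_right]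
  by_cases hw : x ∈ Icc (max p q - h) (min p q + h)
  · rw [signBump, signBump, indicator_of_mem (hwin.1 hw).1, indicator_of_mem (hwin.1 hw).2,
      sign_sub_mul_sign_sub hx.1 hx.2, indicator_of_mem hw]
    by_cases hm : x ∈ Ioo (min p q) (max p q)
    · norm_num [hm, hw]
    · simp [hm]
  · rcases not_and_or.1 (mt hwin.2 hw) with h' | h' <;> simp [signBump, h', hw]

lemma intervalIntegrable_signBump_mul (a b h p q : ℝ) :
    IntervalIntegrable (fun x => signBump h p x * signBump h q x) volume a b :=
  ((intervalIntegrable_indicator_one a b measurableSet_Icc).sub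
    ((intervalIntegrable_indicator_one a b
      (measurableSet_Icc.inter measurableSet_Ioo)).const_mul 2)).congr_ae
    (ae_restrict_of_ae (signBump_mul_signBump_ae_eq h p q).symm)

def symKernel (a b h p q : ℝ) : ℝ := ∫ x in a..b, signBump h p x * signBump h q x

lemma symKernel_eq_measureReal {a b : ℝ} (hab : a ≤ b) (h p q : ℝ) :
    symKernel a b h p q =
      volume.real (Icc (max p q - h) (min p q + h) ∩ Ioc a b)
        - 2 * volume.real
          (Icc (max p q - h) (min p q + h) ∩ Ioo (min p q) (max p q) ∩ Ioc a b) := by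
  have hW : MeasurableSet (Icc (max p q - h) (min p q + h)) := measurableSet_Icc
  have hS := hW.inter (measurableSet_Ioo (a := min p q) (b := max p q))
  rw [symKernel, intervalIntegral.integral_congr_ae
      ((signBump_mul_signBump_ae_eq h p q).mono fun x hx _ => hx),
    intervalIntegral.integral_sub (intervalIntegrable_indicator_one a b hW)
      ((intervalIntegrable_indicator_one a b hS).const_mul 2),
    intervalIntegral.integral_const_mul, integral_indicator_one_of_le hab hW,
    integral_indicator_one_of_le hab hS]

lemma abs_symKernel_le {a b h : ℝ} (hab : a ≤ b) (hh : 0 ≤ h) (p q : ℝ) :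
    |symKernel a b h p q| ≤ 2 * h := by
  rw [symKernel_eq_measureReal hab]
  set W := Icc (max p q - h) (min p q + h)
  have hWfin : volume W ≠ ⊤ := measure_Icc_lt_top.ne
  have hS :
      volume.real (W ∩ Ioo (min p q) (max p q) ∩ Ioc a b) ≤ volume.real (W ∩ Ioc a b) :=
    measureReal_mono (inter_subset_inter_left _ inter_subset_left)
      (measure_ne_top_of_subset inter_subset_left hWfin)
  have hW : volume.real (W ∩ Ioc a b) ≤ 2 * h :=
    calc _ ≤ volume.real W := measureReal_mono inter_subset_left hWfin
      _ = max (min p q + h - (max p q - h)) 0 := Real.volume_real_Icc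
      _ ≤ 2 * h := max_le (by linarith [min_le_max (a := p) (b := q)]) (by linarith)
  rw [abs_le]
  constructor <;>
    linarith [measureReal_nonneg (μ := volume) (s := W ∩ Ioo (min p q) (max p q) ∩ Ioc a b)]

lemma symKernel_eq_of_window_subset {a b h p q : ℝ} (hpq : |p - q| ≤ 2 * h)
    (ha : a ≤ max p q - h) (hb : min p q + h ≤ b) :
    symKernel a b h p q = max (2 * h - 3 * |p - q|) (|p - q| - 2 * h) := by
  have hd : max p q - min p q = |p - q| := max_sub_min_eq_abs' p q
  have hmM : min p q ≤ max p q := min_le_max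
  rw [symKernel_eq_measureReal (by linarith)]
  set W := Icc (max p q - h) (min p q + h)
  have hW : volume.real (W ∩ Ioc a b) = 2 * h - |p - q| := by
    rw [volume_real_eq_of_Ioo_subset_of_subset_Icc (by linarith) ?_ inter_subset_left]
    · linarith
    · exact fun x hx => ⟨Ioo_subset_Icc_self hx, by linarith [hx.1], by linarith [hx.2]⟩
  rcases le_or_gt |p - q| h with hle | hlt
  · have hS : volume.real (W ∩ Ioo (min p q) (max p q) ∩ Ioc a b) = |p - q| := by
      rw [volume_real_eq_of_Ioo_subset_of_subset_Icc hmM ?_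
        fun x hx => Ioo_subset_Icc_self hx.1.2, hd]
      exact fun x hx => ⟨⟨⟨by linarith [hx.1], by linarith [hx.2]⟩, hx⟩,
        by linarith [hx.1], by linarith [hx.2]⟩
    rw [hW, hS, max_eq_left (by linarith)]
    ring
  · have hS : volume.real (W ∩ Ioo (min p q) (max p q) ∩ Ioc a b) = 2 * h - |p - q| := by
      rw [volume_real_eq_of_Ioo_subset_of_subset_Icc (by linarith) ?_ fun x hx => hx.1.1]
      · linarith
      · exact fun x hx => ⟨⟨Ioo_subset_Icc_self hx, by linarith [hx.1], by linarith [hx.2]⟩,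
          by linarith [hx.1], by linarith [hx.2]⟩
    rw [hW, hS, max_eq_right (by linarith)]
    ring

lemma symKernel_eq_zero_of_lt {a b h p q : ℝ} (hpq : 2 * h < |p - q|) :
    symKernel a b h p q = 0 := by
  have hzero : ∀ x, signBump h p x * signBump h q x = 0 := by
    intro x
    by_cases hxp : x ∈ Icc (p - h) (p + h)
    · have hxq : x ∉ Icc (q - h) (q + h) := fun hxq => hpq.not_ge <| abs_le.2
        ⟨by linarith [hxp.2, hxq.1], by linarith [hxp.1, hxq.2]⟩
      rw [signBump, signBump, indicator_of_notMem hxq, mul_zero]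
    · rw [signBump, indicator_of_notMem hxp, zero_mul]
  simp [symKernel, hzero]

def indexRange (N h : ℕ) : Finset ℤ := Finset.Icc ((N : ℤ) - 2 * h) (2 * N + 2 * h)

lemma sum_mul_sign_eq_sum_signBump (f : ℕ → ℝ) (N h : ℕ) {x : ℝ}
    (hx : x ∈ Icc (N : ℝ) (2 * N)) :
    ∑ n ∈ Finset.Icc ⌈x - (h : ℝ)⌉ ⌊x + (h : ℝ)⌋,
        f n.toNat * Real.sign ((n : ℝ) - x)
      = ∑ n ∈ indexRange N h, f n.toNat * signBump h n x := by
  simp only [signBump, indicator_apply, mul_ite, mul_zero, ← Finset.sum_filter]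
  congr 1
  ext n
  simp only [indexRange, Finset.mem_filter, Finset.mem_Icc, Int.ceil_le, Int.le_floor]
  constructor
  · rintro ⟨hlo, hhi⟩
    refine ⟨⟨?_, ?_⟩, by linarith, by linarith⟩
    · exact_mod_cast (by linarith [hx.1] : (N : ℝ) - 2 * h ≤ n)
    · exact_mod_cast (by linarith [hx.2] : (n : ℝ) ≤ 2 * N + 2 * h)
  · rintro ⟨-, hlo, hhi⟩
    constructor <;> linarith

lemma symInt_eq_sum_symKernel (f : ℕ → ℝ) (N h : ℕ) :
    symInt f N h = ∑ n ∈ indexRange N h, ∑ m ∈ indexRange N h,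
      f n.toNat * f m.toNat * symKernel N (2 * N) h n m := by
  have hN : (N : ℝ) ≤ 2 * N := by linarith [(N.cast_nonneg : (0 : ℝ) ≤ N)]
  have hsq : EqOn
      (fun x => (∑ n ∈ Finset.Icc ⌈x - (h : ℝ)⌉ ⌊x + (h : ℝ)⌋,
        f n.toNat * Real.sign ((n : ℝ) - x)) ^ 2)
      (fun x => ∑ nm ∈ indexRange N h ×ˢ indexRange N h,
        f nm.1.toNat * f nm.2.toNat * (signBump h nm.1 x * signBump h nm.2 x))
      (uIcc (N : ℝ) (2 * N)) := by
    intro x hx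
    rw [uIcc_of_le hN] at hx
    simp only [sum_mul_sign_eq_sum_signBump f N h hx, sq, Finset.sum_mul_sum,
      Finset.sum_product]
    exact Finset.sum_congr rfl fun n _ => Finset.sum_congr rfl fun m _ => by ring
  rw [symInt, intervalIntegral.integral_congr hsq, intervalIntegral.integral_finsetSum
    fun _ _ => (intervalIntegrable_signBump_mul _ _ _ _ _).const_mul _, Finset.sum_product]
  simp only [intervalIntegral.integral_const_mul, symKernel]

lemma Wt_eq_zero {h : ℕ} {a : ℤ} (ha : 2 * (h : ℤ) < |a|) : Wt h a = 0 := if_neg ha.not_ge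

lemma abs_Wt_le (h : ℕ) (a : ℤ) : |Wt h a| ≤ 2 * h := by
  unfold Wt
  split_ifs with ha
  · have ha' : |(a : ℝ)| ≤ 2 * h := by exact_mod_cast ha
    rw [abs_le]
    constructor
    · exact le_max_of_le_right (by linarith [abs_nonneg (a : ℝ)])
    · exact max_le (by linarith [abs_nonneg (a : ℝ)]) (by linarith [abs_nonneg (a : ℝ)])
  · simp

def mainKernel (N h : ℕ) (n m : ℤ) : ℝ :=
  if n ∈ Finset.Ioc (N : ℤ) (2 * N) ∧ m ≠ n then Wt h (n - m) else 0

lemma abs_mainKernel_le (N h : ℕ) (n m : ℤ) : |mainKernel N h n m| ≤ 2 * h := by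
  unfold mainKernel
  split_ifs
  · exact abs_Wt_le h (n - m)
  · simp

lemma sum_Wt_mul_Cf_eq (f : ℕ → ℝ) (N h : ℕ) :
    ∑ a ∈ (Finset.Icc (-(2 * (h : ℤ))) (2 * (h : ℤ))).filter (· ≠ 0), Wt h a * Cf f N a
      = ∑ n ∈ indexRange N h, ∑ m ∈ indexRange N h,
          f n.toNat * f m.toNat * mainKernel N h n m := by
  set A := (Finset.Icc (-(2 * (h : ℤ))) (2 * (h : ℤ))).filter (· ≠ 0)
  have hIoc : Finset.Ioc (N : ℤ) (2 * N) ⊆ indexRange N h := fun n hn => by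
    simp only [indexRange, Finset.mem_Ioc, Finset.mem_Icc] at hn ⊢; omega
  have hrow : ∀ n ∈ Finset.Ioc (N : ℤ) (2 * N),
      ∑ a ∈ A, Wt h a * (f n.toNat * f (n - a).toNat)
        = ∑ m ∈ indexRange N h, f n.toNat * f m.toNat * mainKernel N h n m := by
    intro n hn
    have hsub : A.image (n - ·) ⊆ indexRange N h := by
      intro m hm
      simp only [A, Finset.mem_image, Finset.mem_filter, Finset.mem_Icc] at hm
      simp only [indexRange, Finset.mem_Ioc, Finset.mem_Icc] at hn ⊢
      omega
    have hzero : ∀ m ∈ indexRange N h, m ∉ A.image (n - ·) →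
        f n.toNat * f m.toNat * mainKernel N h n m = 0 := by
      intro m _ hm
      simp only [A, Finset.mem_image, Finset.mem_filter, Finset.mem_Icc, not_exists,
        not_and] at hm
      by_cases hmn : m = n
      · simp [mainKernel, hmn]
      · have hfar : 2 * (h : ℤ) < |n - m| := by
          rw [lt_abs]; by_contra! hc; exact hm (n - m) ⟨by omega, by omega⟩ (by omega)
        simp [mainKernel, Wt_eq_zero hfar]
    calc ∑ a ∈ A, Wt h a * (f n.toNat * f (n - a).toNat)
        = ∑ a ∈ A, f n.toNat * f (n - a).toNat * mainKernel N h n (n - a) := by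
          refine Finset.sum_congr rfl fun a ha => ?_
          have ha0 : n - a ≠ n := by simp only [A, Finset.mem_filter] at ha; omega
          simp only [mainKernel, hn, ne_eq, ha0, not_false_eq_true, and_self, if_true,
            sub_sub_cancel]
          ring
      _ = ∑ m ∈ A.image (n - ·), f n.toNat * f m.toNat * mainKernel N h n m := by
          rw [Finset.sum_image fun a _ b _ hab => by simpa using hab]
      _ = _ := Finset.sum_subset hsub hzero
  rw [← Finset.sum_subset hIoc fun n _ hn => Finset.sum_eq_zero fun m _ => by
    simp [mainKernel, hn]]
  simp only [Cf, Finset.mul_sum]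
  rw [Finset.sum_comm]
  exact Finset.sum_congr rfl hrow

lemma symKernel_eq_mainKernel_of_far {N h : ℕ} {n m : ℤ} (hfar : 2 * (h : ℤ) < |n - m|) :
    symKernel N (2 * N) h n m = mainKernel N h n m := by
  have hfar' : 2 * (h : ℝ) < |(n : ℝ) - m| := by exact_mod_cast hfar
  simp [symKernel_eq_zero_of_lt hfar', mainKernel, Wt_eq_zero hfar]

lemma symKernel_eq_mainKernel_of_interior {N h : ℕ} {n m : ℤ} (hlo : (N : ℤ) + h < n)
    (hhi : n + h ≤ 2 * (N : ℤ)) (hmn : m ≠ n) :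
    symKernel N (2 * N) h n m = mainKernel N h n m := by
  rcases lt_or_ge (2 * (h : ℤ)) |n - m| with hfar | hnear
  · exact symKernel_eq_mainKernel_of_far hfar
  have hlo' : (N : ℝ) + h < n := by exact_mod_cast hlo
  have hhi' : (n : ℝ) + h ≤ 2 * N := by exact_mod_cast hhi
  have hnear' : |(n : ℝ) - m| ≤ 2 * h := by exact_mod_cast hnear
  rw [symKernel_eq_of_window_subset hnear' (by linarith [le_max_left (n : ℝ) m])
      (by linarith [min_le_left (n : ℝ) m]), mainKernel,
    if_pos ⟨Finset.mem_Ioc.2 ⟨by omega, by omega⟩, hmn⟩, Wt, if_pos hnear]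
  push_cast
  rfl

/-- Row `n` of `symKernel - mainKernel` vanishes outside this set: off the diagonal it vanishes
as soon as the window around `n` lies in `(N, 2N]`. -/
def defectSupport (N h : ℕ) (n : ℤ) : Finset ℤ :=
  if (N : ℤ) + h < n ∧ n + h ≤ 2 * (N : ℤ) then {n} else Finset.Icc (n - 2 * h) (n + 2 * h)

lemma mem_defectSupport {N h : ℕ} {n m : ℤ}
    (hne : symKernel N (2 * N) h n m ≠ mainKernel N h n m) : m ∈ defectSupport N h n := by
  have hnear : |n - m| ≤ 2 * (h : ℤ) := by
    by_contra! hfar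
    exact hne (symKernel_eq_mainKernel_of_far hfar)
  unfold defectSupport
  split_ifs with hint
  · by_contra hmn
    exact hne (symKernel_eq_mainKernel_of_interior hint.1 hint.2 (Finset.notMem_singleton.1 hmn))
  · rw [abs_le] at hnear
    rw [Finset.mem_Icc]
    omega

lemma sum_card_defectSupport_le (N h : ℕ) :
    ∑ n ∈ indexRange N h, (defectSupport N h n).card
      ≤ (N + 4 * h + 1) + (6 * h + 1) * (4 * h + 1) := by
  have hcard : ∀ n, (defectSupport N h n).card =
      if (N : ℤ) + h < n ∧ n + h ≤ 2 * (N : ℤ) then 1 else 4 * h + 1 := by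
    intro n
    unfold defectSupport
    split_ifs
    · rfl
    · rw [Int.card_Icc]; omega
  have hbad : (indexRange N h).filter (fun n => ¬((N : ℤ) + h < n ∧ n + h ≤ 2 * (N : ℤ)))
      ⊆ Finset.Icc ((N : ℤ) - 2 * h) (N + h)
        ∪ Finset.Icc (2 * (N : ℤ) - h + 1) (2 * N + 2 * h) := by
    intro n hn
    simp only [indexRange, Finset.mem_filter, Finset.mem_Icc, Finset.mem_union] at hn ⊢
    omega
  have hbad_card : ((indexRange N h).filter
      (fun n => ¬((N : ℤ) + h < n ∧ n + h ≤ 2 * (N : ℤ)))).card ≤ 6 * h + 1 := by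
    refine (Finset.card_le_card hbad).trans ((Finset.card_union_le _ _).trans ?_)
    rw [Int.card_Icc, Int.card_Icc]
    omega
  have hrange_card : (indexRange N h).card = N + 4 * h + 1 := by
    rw [indexRange, Int.card_Icc]; omega
  simp only [hcard, Finset.sum_ite, Finset.sum_const, smul_eq_mul, mul_one]
  gcongr
  exact (Finset.card_filter_le _ _).trans hrange_card.le

lemma abs_sum_mul_symKernel_sub_mainKernel_le (f : ℕ → ℝ) {N h : ℕ} {B : ℝ}
    (hB : ∀ n ∈ indexRange N h, |f n.toNat| ≤ B) {n : ℤ} (hn : n ∈ indexRange N h) :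
    |∑ m ∈ indexRange N h,
        f n.toNat * f m.toNat * (symKernel N (2 * N) h n m - mainKernel N h n m)|
      ≤ (defectSupport N h n).card * (B ^ 2 * (4 * h)) := by
  have hN2 : (N : ℝ) ≤ 2 * N := by linarith [(N.cast_nonneg : (0 : ℝ) ≤ N)]
  refine abs_sum_le_card_mul (by positivity) (fun m hm => ?_) fun m _ hm => mem_defectSupport ?_
  · rw [abs_mul, abs_mul, sq]
    have hB0 : 0 ≤ B := (abs_nonneg _).trans (hB n hn)
    have hdiff : |symKernel N (2 * N) h n m - mainKernel N h n m| ≤ 4 * h := by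
      linarith [abs_sub (symKernel N (2 * N) h n m) (mainKernel N h n m),
        abs_symKernel_le hN2 h.cast_nonneg (n : ℝ) m, abs_mainKernel_le N h n m]
    gcongr
    exacts [hB n hn, hB m hm]
  · exact sub_ne_zero.1 (right_ne_zero_of_mul hm)

lemma abs_symInt_sub_sum_Wt_mul_Cf_le (f : ℕ → ℝ) {N h : ℕ} (hN : 1 ≤ N) (hhN : h ≤ N)
    {B : ℝ} (hB : ∀ n ∈ indexRange N h, |f n.toNat| ≤ B) :
    |symInt f N h - ∑ a ∈ (Finset.Icc (-(2 * (h : ℤ))) (2 * (h : ℤ))).filter (· ≠ 0),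
        Wt h a * Cf f N a| ≤ 100 * B ^ 2 * (N * h + h ^ 3) := by
  have hcount : ((∑ n ∈ indexRange N h, (defectSupport N h n).card : ℕ) : ℝ) * (4 * h)
      ≤ 100 * (N * h + h ^ 3) := by
    have hle : ((∑ n ∈ indexRange N h, (defectSupport N h n).card : ℕ) : ℝ)
        ≤ (N + 4 * h + 1) + (6 * h + 1) * (4 * h + 1) := by
      exact_mod_cast sum_card_defectSupport_le N h
    have hN' : (1 : ℝ) ≤ N := by exact_mod_cast hN
    have hhN' : (h : ℝ) ≤ N := by exact_mod_cast hhN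
    nlinarith [mul_le_mul_of_nonneg_right hle (by positivity : (0 : ℝ) ≤ 4 * h),
      mul_le_mul_of_nonneg_left hhN' h.cast_nonneg, mul_le_mul_of_nonneg_left hN' h.cast_nonneg]
  rw [symInt_eq_sum_symKernel, sum_Wt_mul_Cf_eq, ← Finset.sum_sub_distrib]
  simp only [← Finset.sum_sub_distrib, ← mul_sub]
  calc _ ≤ ∑ n ∈ indexRange N h, |∑ m ∈ indexRange N h,
          f n.toNat * f m.toNat * (symKernel N (2 * N) h n m - mainKernel N h n m)| :=
        Finset.abs_sum_le_sum_abs _ _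
    _ ≤ ∑ n ∈ indexRange N h, (defectSupport N h n).card * (B ^ 2 * (4 * h)) :=
        Finset.sum_le_sum fun n hn => abs_sum_mul_symKernel_sub_mainKernel_le f hB hn
    _ = B ^ 2 *
          (((∑ n ∈ indexRange N h, (defectSupport N h n).card : ℕ) : ℝ) * (4 * h)) := by
        rw [← Finset.sum_mul, Nat.cast_sum]; ring
    _ ≤ 100 * B ^ 2 * (N * h + h ^ 3) := by nlinarith [sq_nonneg B]

lemma EssBdd.exists_abs_le_mul_rpow {f : ℕ → ℝ} (hf : EssBdd f) {ε : ℝ} (hε : 0 < ε) :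
    ∃ C, ∀ M : ℝ, 1 ≤ M → ∀ n : ℕ, (n : ℝ) ≤ M → |f n| ≤ C * M ^ ε := by
  obtain ⟨C, hC⟩ := hf ε hε
  refine ⟨|C| + |f 0|, fun M hM n hn => ?_⟩
  have hMε : 1 ≤ M ^ ε := Real.one_le_rpow hM hε.le
  rcases Nat.eq_zero_or_pos n with rfl | hn0
  · nlinarith [abs_nonneg C, abs_nonneg (f 0)]
  · calc |f n| ≤ C * (n : ℝ) ^ ε := hC n hn0
      _ ≤ |C| * M ^ ε := by gcongr; exact le_abs_self C
      _ ≤ (|C| + |f 0|) * M ^ ε := by nlinarith [abs_nonneg (f 0)]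

theorem statement9_general (f : ℕ → ℝ) (hf : EssBdd f) (h : ℕ → ℕ)
    (hh2 : (fun N => (h N : ℝ)) =o[atTop] (fun N => (N : ℝ)))
    (ε : ℝ) (hε : 0 < ε) :
    (fun N => symInt f N (h N)
        - ∑ a ∈ (Finset.Icc (-(2 * (h N : ℤ))) (2 * (h N : ℤ))).filter (· ≠ 0),
            Wt (h N) a * Cf f N a)
      =O[atTop] (fun N => (N : ℝ) ^ ε * ((N : ℝ) * (h N : ℝ) + (h N : ℝ) ^ 3)) := by
  obtain ⟨C, hC⟩ := hf.exists_abs_le_mul_rpow (half_pos hε)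
  refine isBigO_iff.2 ⟨100 * C ^ 2 * 4 ^ ε, ?_⟩
  filter_upwards [eventually_ge_atTop 1, hh2.bound one_pos] with N hN hhN
  have hhN' : h N ≤ N := by simpa using hhN
  have hB : ∀ n ∈ indexRange N (h N), |f n.toNat| ≤ C * (4 * N : ℝ) ^ (ε / 2) := by
    refine fun n hn => hC _ (by linarith [(Nat.one_le_cast.2 hN : (1 : ℝ) ≤ N)]) _ ?_
    have : n.toNat ≤ 4 * N := by simp only [indexRange, Finset.mem_Icc] at hn; omega
    exact_mod_cast this
  have hB2 : (C * (4 * N : ℝ) ^ (ε / 2)) ^ 2 = C ^ 2 * 4 ^ ε * (N : ℝ) ^ ε := by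
    rw [mul_pow, ← Real.rpow_natCast ((4 * (N : ℝ)) ^ (ε / 2)) 2,
      ← Real.rpow_mul (by positivity), Nat.cast_ofNat, div_mul_cancel₀ ε two_ne_zero,
      Real.mul_rpow (by norm_num) (by positivity), mul_assoc]
  rw [Real.norm_eq_abs, Real.norm_of_nonneg (by positivity)]
  calc _ ≤ 100 * (C * (4 * N : ℝ) ^ (ε / 2)) ^ 2 * (N * h N + (h N : ℝ) ^ 3) :=
        abs_symInt_sub_sum_Wt_mul_Cf_le f hN hhN' hB
    _ = _ := by rw [hB2]; ring

theorem statement9 (f : ℕ → ℝ) (hf : EssBdd f) (h : ℕ → ℕ)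
    (hh1 : Tendsto h atTop atTop)
    (hh2 : (fun N => (h N : ℝ)) =o[atTop] (fun N => (N : ℝ)))
    (ε : ℝ) (hε : 0 < ε) :
    (fun N => symInt f N (h N)
        - ∑ a ∈ (Finset.Icc (-(2 * (h N : ℤ))) (2 * (h N : ℤ))).filter (· ≠ 0),
            Wt (h N) a * Cf f N a)
      =O[atTop] (fun N => (N : ℝ) ^ ε * ((N : ℝ) * (h N : ℝ) + (h N : ℝ) ^ 3)) :=
  statement9_general f hf h hh2 ε hε
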